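/- For every finite group G there exist irreducible SFTs X and Y and a Galois factor ϖ : Y → X with Gal(Y/X, ϖ) ≅ G. Concretely, take X = Y = Gℤ (the full shift on alphabet G) and ϖ(y)_i = y_i⁻¹ · y_{i+1}; then ϖ is an unramified factor map of degree |G|, the maps τ_g(y)_i = g·y_i for g ∈ G are relative automorphisms, and g ↦ τ_g is an isomorphism G ≅ Gal(Y/X, ϖ). -/

import Mathlib

open Function Set

/-- The shift map on bi-infinite sequences. -/
def shiftMap (A : Type*) : (ℤ → A) → (ℤ → A) := fun x i => x (i + 1)

/-- A (two-sided) subshift over an alphabet `A`: a closed, shift-invariant subset of the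
full shift `A^ℤ` on which the shift is onto. -/
structure Subshift (A : Type*) [TopologicalSpace A] where
  carrier : Set (ℤ → A)
  isClosed' : IsClosed carrier
  shift_mem' : ∀ x ∈ carrier, shiftMap A x ∈ carrier
  shift_surjOn' : ∀ x ∈ carrier, ∃ y ∈ carrier, shiftMap A y = x

/-- The shift map restricted to a subshift. -/
def Subshift.σ {A : Type*} [TopologicalSpace A] (X : Subshift A) : X.carrier → X.carrier :=
  fun x => ⟨shiftMap A x.1, X.shift_mem' x.1 x.2⟩

/-- `X` is a shift of finite type: membership is determined by a finite-window rule. -/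
def Subshift.IsSFT {A : Type*} [TopologicalSpace A] (X : Subshift A) : Prop :=
  ∃ (n : ℕ) (W : Set (Fin n → A)),
    X.carrier = {x | ∀ i : ℤ, (fun k : Fin n => x (i + (k.val : ℤ))) ∈ W}

/-- Irreducibility (= topological transitivity) of a subshift. -/
def Subshift.Irreducible {A : Type*} [TopologicalSpace A] (X : Subshift A) : Prop :=
  ∀ U V : Set X.carrier, IsOpen U → IsOpen V → U.Nonempty → V.Nonempty →
    ∃ n : ℕ, (X.σ^[n] '' U ∩ V).Nonempty

/-- A factor map between subshifts: a continuous, shift-commuting surjection. -/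
structure IsFactorMap {A B : Type*} [TopologicalSpace A] [TopologicalSpace B]
    (Y : Subshift B) (X : Subshift A) (ϖ : Y.carrier → X.carrier) : Prop where
  continuous : Continuous ϖ
  commutes : ∀ y, ϖ (Y.σ y) = X.σ (ϖ y)
  surjective : Function.Surjective ϖ

/-- An unramified (constant-to-one) factor map of degree `d`. -/
def IsUnramified {A B : Type*} [TopologicalSpace A] [TopologicalSpace B]
    (Y : Subshift B) (X : Subshift A) (ϖ : Y.carrier → X.carrier) (d : ℕ) : Prop :=
  IsFactorMap Y X ϖ ∧ ∀ x : X.carrier, (ϖ ⁻¹' {x}).Finite ∧ (ϖ ⁻¹' {x}).ncard = d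

/-- The relative automorphism group `Aut(Y/X, ϖ)`: shift-commuting self-homeomorphisms of `Y`
over `X`. -/
def relAut {A B : Type*} [TopologicalSpace A] [TopologicalSpace B]
    (Y : Subshift B) (X : Subshift A) (ϖ : Y.carrier → X.carrier) :
    Subgroup (Equiv.Perm Y.carrier) where
  carrier := {φ | Continuous φ ∧ Continuous (φ⁻¹ : Equiv.Perm Y.carrier) ∧
    (∀ y, φ (Y.σ y) = Y.σ (φ y)) ∧ ∀ y, ϖ (φ y) = ϖ y}
  one_mem' := ⟨by simpa using continuous_id, by simpa using continuous_id,
    fun _ => by simp, fun _ => by simp⟩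
  mul_mem' := by
    rintro φ ψ ⟨hc, hci, hcomm, hrel⟩ ⟨hc', hci', hcomm', hrel'⟩
    refine ⟨?_, ?_, fun y => ?_, fun y => ?_⟩
    · simpa [Equiv.Perm.coe_mul] using hc.comp hc'
    · simpa [mul_inv_rev, Equiv.Perm.coe_mul] using hci'.comp hci
    · simp [Equiv.Perm.mul_apply, hcomm, hcomm']
    · simp [Equiv.Perm.mul_apply, hrel, hrel']
  inv_mem' := by
    rintro φ ⟨hc, hci, hcomm, hrel⟩
    refine ⟨hci, by simpa using hc, fun y => φ.injective ?_, fun y => ?_⟩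
    · simp [hcomm, Equiv.apply_symm_apply]
    · conv_rhs => rw [← (Equiv.apply_symm_apply φ y : φ (φ⁻¹ y) = y)]
      exact (hrel _).symm

/-- A pointed Galois factor of degree `d` over a pointed subshift `(X, x₀)`. -/
def IsPointedGaloisFactor {A B : Type*} [TopologicalSpace A] [TopologicalSpace B]
    (Y : Subshift B) (y₀ : Y.carrier) (X : Subshift A) (x₀ : X.carrier)
    (ϖ : Y.carrier → X.carrier) (d : ℕ) : Prop :=
  Y.IsSFT ∧ Y.Irreducible ∧ ϖ y₀ = x₀ ∧ IsUnramified Y X ϖ d ∧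
    Nat.card (relAut Y X ϖ) = d

/-- The full shift on an alphabet `A`. -/
def fullShift (A : Type*) [TopologicalSpace A] : Subshift A where
  carrier := Set.univ
  isClosed' := isClosed_univ
  shift_mem' := fun _ _ => Set.mem_univ _
  shift_surjOn' := fun x _ => ⟨fun i => x (i - 1), Set.mem_univ _, by
    funext i; simp [shiftMap]⟩


section Aux

lemma shiftMap_iterate {A : Type*} (n : ℕ) (w : ℤ → A) (i : ℤ) :
    (shiftMap A)^[n] w i = w (i + n) := by
  induction n generalizing w i with
  | zero => simp
  | succ n ih =>
    rw [Function.iterate_succ_apply, ih]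
    show w (i + n + 1) = w (i + (n + 1 : ℕ))
    congr 1
    push_cast
    ring

lemma sigma_iterate {A : Type*} [TopologicalSpace A] (n : ℕ) (y : (fullShift A).carrier) :
    ((fullShift A).σ)^[n] y = ⟨(shiftMap A)^[n] y.1, Set.mem_univ _⟩ := by
  induction n with
  | zero => rfl
  | succ n ih =>
    rw [Function.iterate_succ_apply', Function.iterate_succ_apply', ih]
    rfl

lemma cylinder {G : Type*} [TopologicalSpace G] {S : Set (ℤ → G)} (hS : IsOpen S)
    {y : ℤ → G} (hy : y ∈ S) :
    ∃ N : ℕ, ∀ w : ℤ → G, (∀ i : ℤ, i.natAbs ≤ N → w i = y i) → w ∈ S := by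
  obtain ⟨I, u, hu, hsub⟩ := isOpen_pi_iff.mp hS y hy
  refine ⟨I.sup Int.natAbs, fun w hw => hsub fun i hi => ?_⟩
  rw [hw i (Finset.le_sup hi)]
  exact (hu i hi).2

variable {G : Type*} [Group G]

def posP (x : ℤ → G) : ℕ → G
  | 0 => 1
  | n + 1 => posP x n * x n

def negP (x : ℤ → G) : ℕ → G
  | 0 => 1
  | n + 1 => x (-(n + 1 : ℕ)) * negP x n

def sol (x : ℤ → G) : ℤ → G := fun i =>
  if 0 ≤ i then posP x i.toNat else (negP x (-i).toNat)⁻¹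

lemma sol_zero (x : ℤ → G) : sol x 0 = 1 := by simp [sol, posP]

lemma sol_succ (x : ℤ → G) (i : ℤ) : sol x (i + 1) = sol x i * x i := by
  rcases le_or_gt 0 i with h | h
  · have h1 : 0 ≤ i + 1 := by omega
    have h2 : (i + 1).toNat = i.toNat + 1 := by omega
    rw [sol, sol]
    simp only [if_pos h1, if_pos h, h2, posP]
    congr 2
    omega
  · have hni : ¬ (0 ≤ i) := by omega
    have hm : (-i).toNat = (-(i+1)).toNat + 1 := by omega
    have hcast : (-(((-(i+1)).toNat + 1 : ℕ)) : ℤ) = i := by omega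
    have hsoli : sol x i = (x i * negP x (-(i+1)).toNat)⁻¹ := by
      rw [sol]
      simp only [if_neg hni, hm, negP, hcast]
    have hgoal : sol x (i + 1) = (negP x (-(i+1)).toNat)⁻¹ := by
      rcases eq_or_lt_of_le (show i + 1 ≤ 0 by omega) with h0 | h0
      · have hz : (-(i+1)).toNat = 0 := by omega
        rw [hz, h0, sol_zero, negP]
        simp
      · rw [sol, if_neg (by omega)]
    rw [hgoal, hsoli]
    group

lemma fiber_eq {x y : ℤ → G} (h : ∀ i, (y i)⁻¹ * y (i + 1) = x i) (i : ℤ) :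
    y i = y 0 * sol x i := by
  induction i using Int.induction_on with
  | zero => simp [sol_zero]
  | succ n ih =>
    have h1 : y (n + 1) = y n * x n := by rw [← h n]; group
    rw [h1, ih, sol_succ, mul_assoc]
  | pred n ih =>
    have e : (-(n:ℤ) - 1 + 1) = -(n:ℤ) := by ring
    have h1 := h (-(n:ℤ) - 1)
    rw [e] at h1
    have h2 : y (-(n:ℤ) - 1) = y (-(n:ℤ)) * (x (-(n:ℤ)-1))⁻¹ := by rw [← h1]; group
    have h3 := sol_succ x (-(n:ℤ)-1)
    rw [e] at h3
    have h4 : sol x (-(n:ℤ)-1) = sol x (-(n:ℤ)) * (x (-(n:ℤ)-1))⁻¹ := by rw [h3]; group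
    rw [h2, ih, h4, mul_assoc]

variable (G) in
/-- The cocycle factor map on the full shift. -/
def cocycle [TopologicalSpace G] : (fullShift G).carrier → (fullShift G).carrier :=
  fun y => ⟨fun i => (y.1 i)⁻¹ * y.1 (i + 1), Set.mem_univ _⟩

variable [TopologicalSpace G] [DiscreteTopology G]

/-- The permutation `y ↦ g • y` of the full shift. -/
def tauPerm (g : G) : Equiv.Perm (fullShift G).carrier where
  toFun y := ⟨fun i => g * y.1 i, Set.mem_univ _⟩
  invFun y := ⟨fun i => g⁻¹ * y.1 i, Set.mem_univ _⟩
  left_inv y := by apply Subtype.ext; funext i; simp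
  right_inv y := by apply Subtype.ext; funext i; simp

lemma tauPerm_continuous (g : G) : Continuous (tauPerm g : (fullShift G).carrier → (fullShift G).carrier) := by
  apply Continuous.subtype_mk
  apply continuous_pi
  intro i
  exact continuous_of_discreteTopology.comp ((continuous_apply i).comp continuous_subtype_val)

lemma tauPerm_mem (g : G) : tauPerm g ∈ relAut (fullShift G) (fullShift G) (cocycle G) := by
  refine ⟨tauPerm_continuous g, ?_, fun y => ?_, fun y => ?_⟩
  · have : (⇑(tauPerm g)⁻¹ : (fullShift G).carrier → (fullShift G).carrier)
        = fun y => ⟨fun i => g⁻¹ * y.1 i, Set.mem_univ _⟩ := rfl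
    rw [this]
    apply Continuous.subtype_mk
    apply continuous_pi
    intro i
    exact continuous_of_discreteTopology.comp ((continuous_apply i).comp continuous_subtype_val)
  · rfl
  · apply Subtype.ext; funext i
    show (g * y.1 i)⁻¹ * (g * y.1 (i+1)) = (y.1 i)⁻¹ * y.1 (i+1)
    group

omit [DiscreteTopology G] in
lemma cocycle_fiber_key {y : (fullShift G).carrier} {x : (fullShift G).carrier}
    (h : cocycle G y = x) (i : ℤ) : y.1 i = y.1 0 * sol x.1 i := by
  apply fiber_eq
  intro j
  exact congrArg (fun z : (fullShift G).carrier => z.1 j) h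

lemma tau_surj (φ : Equiv.Perm (fullShift G).carrier)
    (hφ : φ ∈ relAut (fullShift G) (fullShift G) (cocycle G)) :
    ∃ g : G, tauPerm g = φ := by
  obtain ⟨hc, hci, hcomm, hrel⟩ := hφ
  set c : (ℤ → G) → G := fun w => (φ ⟨w, Set.mem_univ w⟩).1 0 * (w 0)⁻¹ with hc_def
  have key : ∀ (y : (fullShift G).carrier) (i : ℤ), (φ y).1 i = c y.1 * y.1 i := by
    intro y i
    have A := cocycle_fiber_key (x := cocycle G y) (hrel y) i
    have B0 := cocycle_fiber_key (x := cocycle G y) (rfl : cocycle G y = cocycle G y) i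
    have hcy : c y.1 = (φ y).1 0 * (y.1 0)⁻¹ := rfl
    calc (φ y).1 i = (φ y).1 0 * sol (cocycle G y).1 i := A
      _ = ((φ y).1 0 * (y.1 0)⁻¹) * (y.1 0 * sol (cocycle G y).1 i) := by group
      _ = c y.1 * y.1 i := by rw [← B0, hcy]
  have hshift : ∀ w, c (shiftMap G w) = c w := by
    intro w
    have h1 : (φ (⟨shiftMap G w, Set.mem_univ _⟩ : (fullShift G).carrier)).1 0
        = (φ ⟨w, Set.mem_univ w⟩).1 1 := by
      rw [show (⟨shiftMap G w, Set.mem_univ _⟩ : (fullShift G).carrier)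
            = (fullShift G).σ ⟨w, Set.mem_univ w⟩ from rfl, hcomm]
      show (φ (⟨w, Set.mem_univ w⟩ : (fullShift G).carrier)).1 (0 + 1) = _
      norm_num
    have h2 : shiftMap G w 0 = w 1 := by simp [shiftMap]
    show (φ ⟨shiftMap G w, Set.mem_univ _⟩).1 0 * (shiftMap G w 0)⁻¹ = c w
    rw [h1, h2, key ⟨w, Set.mem_univ w⟩ 1]
    show c w * w 1 * (w 1)⁻¹ = c w
    group
  have hshiftn : ∀ (n : ℕ) w, c ((shiftMap G)^[n] w) = c w := by
    intro n
    induction n with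
    | zero => intro w; rfl
    | succ n ih =>
      intro w
      rw [Function.iterate_succ_apply, ih, hshift]
  have hccont : Continuous c := by
    have : c = (fun p : G × G => p.1 * p.2⁻¹) ∘
        (fun w : ℤ → G => ((φ ⟨w, Set.mem_univ w⟩).1 0, w 0)) := rfl
    rw [this]
    exact continuous_of_discreteTopology.comp
      ((((continuous_apply (0:ℤ)).comp (continuous_subtype_val.comp
        (hc.comp (Continuous.subtype_mk continuous_id fun w => Set.mem_univ w)))).prodMk
        (continuous_apply (0:ℤ))))
  have hconst : ∀ w z, c w = c z := by
    intro w z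
    obtain ⟨N, hN⟩ := cylinder ((isOpen_discrete {c w}).preimage hccont)
      (show w ∈ c ⁻¹' {c w} from rfl)
    obtain ⟨N', hN'⟩ := cylinder ((isOpen_discrete {c z}).preimage hccont)
      (show z ∈ c ⁻¹' {c z} from rfl)
    set M : ℕ := N + N' + 1 with hM
    set u : ℤ → G := fun i => if i ≤ (N:ℤ) then w i else z (i - M) with hu
    have h1 : c u = c w := hN u (fun i hi => if_pos (by omega))
    have h2 : c ((shiftMap G)^[M] u) = c z := by
      refine hN' _ (fun i hi => ?_)
      rw [shiftMap_iterate, hu]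
      simp only
      rw [if_neg (by omega)]
      congr 1
      omega
    rw [← h1, ← hshiftn M u, h2]
  refine ⟨c (fun _ => 1), ?_⟩
  apply Equiv.ext
  intro y
  apply Subtype.ext
  funext i
  show c (fun _ => 1) * y.1 i = (φ y).1 i
  rw [key y i, hconst (fun _ => 1) y.1]

def tauHom : G →* relAut (fullShift G) (fullShift G) (cocycle G) where
  toFun g := ⟨tauPerm g, tauPerm_mem g⟩
  map_one' := by
    apply Subtype.ext
    apply Equiv.ext
    intro y
    apply Subtype.ext
    funext i
    show (1 : G) * y.1 i = y.1 i
    simp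
  map_mul' g h := by
    apply Subtype.ext
    apply Equiv.ext
    intro y
    apply Subtype.ext
    funext i
    show (g * h) * y.1 i = g * (h * y.1 i)
    rw [mul_assoc]

lemma tauHom_bijective : Function.Bijective (tauHom (G := G)) := by
  constructor
  · intro g h hgh
    have h2 : tauPerm (G := G) g = tauPerm h := congrArg Subtype.val hgh
    have h3 := congrArg (fun ψ : Equiv.Perm (fullShift G).carrier =>
      (ψ ⟨fun _ => 1, Set.mem_univ _⟩).1 0) h2
    simpa [tauPerm] using h3
  · rintro ⟨φ, hφ⟩
    obtain ⟨g, hg⟩ := tau_surj φ hφ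
    exact ⟨g, Subtype.ext hg⟩

end Aux

/-- Inverse Galois problem for SFTs: for every finite group `G`, the cocycle map
`ϖ(y)ᵢ = yᵢ⁻¹ * yᵢ₊₁` on the full shift `Y = Gℤ` is a Galois factor of degree `|G|`
over `X = Gℤ`, with Galois group isomorphic to `G` via `g ↦ τ_g`, where
`τ_g(y)ᵢ = g * yᵢ`. -/
theorem stmt_11 (G : Type*) [Group G] [Fintype G] [TopologicalSpace G]
    [DiscreteTopology G] :
    let Y := fullShift G
    let ϖ : Y.carrier → Y.carrier :=
      fun y => ⟨fun i => (y.1 i)⁻¹ * y.1 (i + 1), Set.mem_univ _⟩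
    Y.IsSFT ∧ Y.Irreducible ∧ IsUnramified Y Y ϖ (Nat.card G) ∧
      Nat.card (relAut Y Y ϖ) = Nat.card G ∧
      ∃ e : G ≃* relAut Y Y ϖ,
        ∀ (g : G) (y : Y.carrier) (i : ℤ), ((e g).val y).val i = g * y.val i := by
  intro Y ϖ
  have hϖ : ϖ = cocycle G := rfl
  -- SFT
  have hSFT : Y.IsSFT := by
    refine ⟨0, Set.univ, ?_⟩
    have h0 : Y.carrier = Set.univ := rfl
    rw [h0]
    ext x
    simp
  -- Irreducibility
  have hIrr : Y.Irreducible := by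
    rintro U V hU hV ⟨u, hu⟩ ⟨v, hv⟩
    have hj : Continuous (fun w : ℤ → G => (⟨w, Set.mem_univ w⟩ : Y.carrier)) :=
      Continuous.subtype_mk continuous_id _
    obtain ⟨N, hN⟩ := cylinder (hU.preimage hj)
      (show u.1 ∈ _ ⁻¹' U by simpa using hu)
    obtain ⟨N', hN'⟩ := cylinder (hV.preimage hj)
      (show v.1 ∈ _ ⁻¹' V by simpa using hv)
    set M : ℕ := N + N' + 1 with hM
    set w : ℤ → G := fun i => if i ≤ (N:ℤ) then u.1 i else v.1 (i - M) with hw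
    refine ⟨M, ⟨(shiftMap G)^[M] w, Set.mem_univ _⟩, ⟨⟨w, Set.mem_univ _⟩, ?_, ?_⟩, ?_⟩
    · exact hN w (fun i hi => if_pos (by omega))
    · rw [sigma_iterate]
    · refine hN' _ (fun i hi => ?_)
      rw [shiftMap_iterate, hw]
      simp only
      rw [if_neg (show ¬ (i + (M:ℤ) ≤ (N:ℤ)) by omega)]
      rw [show i + (M:ℤ) - (M:ℤ) = i by ring]
  -- surjectivity and fibers of ϖ
  have hsol : ∀ x : Y.carrier, ϖ ⟨sol x.1, Set.mem_univ (sol x.1)⟩ = x := by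
    intro x
    apply Subtype.ext
    funext i
    show (sol x.1 i)⁻¹ * sol x.1 (i + 1) = x.1 i
    rw [sol_succ]
    group
  have hfiber : ∀ x : Y.carrier, ϖ ⁻¹' {x}
      = Set.range (fun g : G => (⟨fun i => g * sol x.1 i, Set.mem_univ _⟩ : Y.carrier)) := by
    intro x
    ext y
    simp only [Set.mem_preimage, Set.mem_singleton_iff, Set.mem_range]
    constructor
    · intro hy
      refine ⟨y.1 0, ?_⟩
      apply Subtype.ext
      funext i
      exact (cocycle_fiber_key (hϖ ▸ hy) i).symm
    · rintro ⟨g, rfl⟩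
      apply Subtype.ext
      funext i
      show (g * sol x.1 i)⁻¹ * (g * sol x.1 (i + 1)) = x.1 i
      rw [sol_succ]
      group
  have hinj_e : ∀ x : Y.carrier, Function.Injective
      (fun g : G => (⟨fun i => g * sol x.1 i, Set.mem_univ _⟩ : Y.carrier)) := by
    intro x g h hgh
    have := congrArg (fun z : Y.carrier => z.1 0) hgh
    simpa [sol_zero] using this
  have hunram : IsUnramified Y Y ϖ (Nat.card G) := by
    refine ⟨⟨?_, ?_, ?_⟩, ?_⟩
    · apply Continuous.subtype_mk
      apply continuous_pi
      intro i
      have hpair : Continuous (fun y : Y.carrier => (y.1 i, y.1 (i+1))) :=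
        ((continuous_apply i).comp continuous_subtype_val).prodMk
          ((continuous_apply (i+1)).comp continuous_subtype_val)
      exact (continuous_of_discreteTopology (f := fun p : G × G => p.1⁻¹ * p.2)).comp hpair
    · intro y
      rfl
    · intro x
      exact ⟨⟨sol x.1, Set.mem_univ (sol x.1)⟩, hsol x⟩
    · intro x
      rw [hfiber x]
      refine ⟨Set.finite_range _, ?_⟩
      rw [← Nat.card_coe_set_eq]
      exact Nat.card_congr (Equiv.ofInjective _ (hinj_e x)).symm
  -- Galois group
  refine ⟨hSFT, hIrr, hunram, ?_,
    ⟨MulEquiv.ofBijective (tauHom (G := G)) tauHom_bijective, fun g y i => rfl⟩⟩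
  exact (Nat.card_congr
    (MulEquiv.ofBijective (tauHom (G := G)) tauHom_bijective).toEquiv).symm
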